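/- For positive integers M1, M2 and positive reals p1, p2, one has p2 M2 ∫_0^1 (1 − x^{p1})^{M1} (1 − x^{p2})^{M2−1} x^{p2−1} dx = ∑_{k=1}^{M2} ∑_{j=1}^{M1} (-1)^{j+k} C(M1,j) C(M2,k) · p1 j/(p1 j + p2 k). -/

import Mathlib

/-!
Since `p₂ M₂ (1 - x^p₂)^(M₂-1) x^(p₂-1) = -d/dx (1 - x^p₂)^M₂`, expanding it and `(1 - x^p₁)^M₁`
binomially turns the integrand into a finite combination of powers `x^(p₁ j + p₂ k - 1)` with
`k ≥ 1`, which integrate to `1 / (p₁ j + p₂ k)`. The resulting coefficient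
`-p₂ k / (p₁ j + p₂ k) = p₁ j / (p₁ j + p₂ k) - 1` loses its constant part to the alternating sum
`∑ⱼ (-1)^j C(M₁, j) = 0`, and the terms with `j = 0` vanish.
-/

open Finset Real

section Binomial

variable {R : Type*} [CommRing R]

theorem one_sub_pow_eq_sum (y : R) (n : ℕ) :
    (1 - y) ^ n = ∑ j ∈ range (n + 1), (-1) ^ j * n.choose j * y ^ j := by
  rw [sub_eq_neg_add, add_pow]
  refine sum_congr rfl fun j _ => ?_
  rw [neg_pow, one_pow]
  ring

theorem sum_range_neg_one_pow_mul_choose {n : ℕ} (hn : n ≠ 0) :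
    ∑ j ∈ range (n + 1), (-1 : R) ^ j * n.choose j = 0 := by
  simpa [zero_pow hn] using (one_sub_pow_eq_sum (1 : R) n).symm

/-- The termwise derivative of `one_sub_pow_eq_sum`, multiplied by `y`. -/
theorem natCast_mul_one_sub_pow_pred_mul (y : R) (n : ℕ) :
    n * (1 - y) ^ (n - 1) * y = -∑ k ∈ Icc 1 n, (-1) ^ k * n.choose k * k * y ^ k := by
  cases n with
  | zero => simp
  | succ m =>
    rw [← Ico_add_one_right_eq_Icc, sum_Ico_eq_sum_range, Nat.add_sub_cancel, Nat.add_sub_cancel,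
      one_sub_pow_eq_sum, mul_sum, sum_mul, ← sum_neg_distrib]
    refine sum_congr rfl fun i _ => ?_
    have h := congrArg (Nat.cast : ℕ → R) (Nat.add_one_mul_choose_eq m i)
    rw [add_comm 1 i]
    push_cast at h ⊢
    linear_combination (-1) ^ i * y ^ (i + 1) * h

end Binomial

theorem one_sub_rpow_pow_eq_sum {x : ℝ} (hx : 0 ≤ x) (p : ℝ) (n : ℕ) :
    (1 - x ^ p) ^ n = ∑ j ∈ range (n + 1), (-1) ^ j * n.choose j * x ^ (p * j) := by
  simp_rw [one_sub_pow_eq_sum, rpow_mul_natCast hx]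

theorem mul_one_sub_rpow_pow_pred_mul_rpow_sub_one {x : ℝ} (hx : 0 < x) (p : ℝ) (n : ℕ) :
    p * n * (1 - x ^ p) ^ (n - 1) * x ^ (p - 1)
      = -∑ k ∈ Icc 1 n, (-1) ^ k * n.choose k * (p * k) * x ^ (p * k - 1) := by
  simp_rw [rpow_sub_one hx.ne', rpow_mul_natCast hx.le]
  rw [show p * n * (1 - x ^ p) ^ (n - 1) * (x ^ p / x)
      = n * (1 - x ^ p) ^ (n - 1) * x ^ p * (p / x) by ring,
    natCast_mul_one_sub_pow_pred_mul, neg_mul, sum_mul]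
  congr 1
  refine sum_congr rfl fun k _ => ?_
  ring

theorem integral_sum_mul_rpow_sub_one {ι : Type*} (s : Finset ι) (c a : ι → ℝ)
    (ha : ∀ i ∈ s, 0 < a i) :
    ∫ x in (0 : ℝ)..1, ∑ i ∈ s, c i * x ^ (a i - 1) = ∑ i ∈ s, c i / a i := by
  rw [intervalIntegral.integral_finsetSum fun i hi =>
    (intervalIntegral.intervalIntegrable_rpow' (by linarith [ha i hi])).const_mul (c i)]
  refine sum_congr rfl fun i hi => ?_
  rw [intervalIntegral.integral_const_mul, integral_rpow (Or.inl (by linarith [ha i hi])),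
    sub_add_cancel, one_rpow, zero_rpow (ha i hi).ne', sub_zero, mul_one_div]

theorem sum_alternating_choose_mul_neg_div {n : ℕ} (hn : n ≠ 0) {a b : ℝ} (ha : 0 ≤ a)
    (hb : 0 < b) :
    ∑ j ∈ range (n + 1), (-1) ^ j * n.choose j * (-b / (a * j + b))
      = ∑ j ∈ Icc 1 n, (-1) ^ j * n.choose j * (a * j / (a * j + b)) := by
  have hsplit : ∀ j : ℕ, -b / (a * j + b) = a * j / (a * j + b) - 1 := fun j => by
    have : a * j + b ≠ 0 := by positivity
    field_simp
    ring
  simp_rw [hsplit, mul_sub, mul_one, sum_sub_distrib]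
  rw [sum_range_neg_one_pow_mul_choose hn, sub_zero, sum_range_eq_add_Ico _ n.add_one_pos,
    Ico_add_one_right_eq_Icc, Nat.cast_zero, mul_zero, zero_div, mul_zero, zero_add]

theorem one_sub_rpow_pow_mul_one_sub_rpow_pow_pred_eq_sum {x : ℝ} (hx : 0 < x) (p1 p2 : ℝ)
    (M1 M2 : ℕ) :
    p2 * M2 * ((1 - x ^ p1) ^ M1 * (1 - x ^ p2) ^ (M2 - 1) * x ^ (p2 - 1))
      = ∑ jk ∈ range (M1 + 1) ×ˢ Icc 1 M2,
          (-1) ^ jk.2 * M2.choose jk.2 * ((-1) ^ jk.1 * M1.choose jk.1 * -(p2 * jk.2))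
            * x ^ (p1 * jk.1 + p2 * jk.2 - 1) := by
  rw [show p2 * M2 * ((1 - x ^ p1) ^ M1 * (1 - x ^ p2) ^ (M2 - 1) * x ^ (p2 - 1))
      = (1 - x ^ p1) ^ M1 * (p2 * M2 * (1 - x ^ p2) ^ (M2 - 1) * x ^ (p2 - 1)) by ring,
    one_sub_rpow_pow_eq_sum hx.le, mul_one_sub_rpow_pow_pred_mul_rpow_sub_one hx, mul_neg,
    sum_mul_sum, ← sum_neg_distrib, sum_product]
  refine sum_congr rfl fun j _ => ?_
  rw [← sum_neg_distrib]
  refine sum_congr rfl fun k _ => ?_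
  rw [add_sub_assoc, rpow_add hx]
  ring

theorem stmt_2_general (M1 M2 : ℕ) (hM1 : 0 < M1)
    (p1 p2 : ℝ) (hp1 : 0 < p1) (hp2 : 0 < p2) :
    p2 * M2 *
      ∫ x in (0:ℝ)..1, (1 - x ^ p1) ^ M1 * (1 - x ^ p2) ^ (M2 - 1) * x ^ (p2 - 1)
    = ∑ k ∈ Finset.Icc 1 M2, ∑ j ∈ Finset.Icc 1 M1,
        (-1 : ℝ) ^ (j + k) * (M1.choose j) * (M2.choose k) *
          (p1 * j / (p1 * j + p2 * k)) := by
  have hintegrand := MeasureTheory.ae_of_all MeasureTheory.volume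
    fun x (hx : x ∈ Set.uIoc (0 : ℝ) 1) =>
      one_sub_rpow_pow_mul_one_sub_rpow_pow_pred_eq_sum (by simpa using hx.1) p1 p2 M1 M2
  have hexponent : ∀ jk ∈ range (M1 + 1) ×ˢ Icc 1 M2, 0 < p1 * jk.1 + p2 * jk.2 := by
    intro jk hjk
    have hk : (1 : ℝ) ≤ jk.2 := by exact_mod_cast (mem_Icc.1 (mem_product.1 hjk).2).1
    positivity
  rw [← intervalIntegral.integral_const_mul, intervalIntegral.integral_congr_ae hintegrand,
    integral_sum_mul_rpow_sub_one _ _ _ hexponent, sum_product_right]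
  refine sum_congr rfl fun k hk => ?_
  have hp2k : (0 : ℝ) < p2 * k := by
    have : (1 : ℝ) ≤ k := by exact_mod_cast (mem_Icc.1 hk).1
    positivity
  simp_rw [mul_div_assoc]
  rw [← mul_sum, sum_alternating_choose_mul_neg_div hM1.ne' hp1.le hp2k, mul_sum]
  refine sum_congr rfl fun j _ => ?_
  ring

theorem stmt_2 (M1 M2 : ℕ) (hM1 : 0 < M1) (hM2 : 0 < M2)
    (p1 p2 : ℝ) (hp1 : 0 < p1) (hp2 : 0 < p2) :
    p2 * M2 *
      ∫ x in (0:ℝ)..1, (1 - x ^ p1) ^ M1 * (1 - x ^ p2) ^ (M2 - 1) * x ^ (p2 - 1)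
    = ∑ k ∈ Finset.Icc 1 M2, ∑ j ∈ Finset.Icc 1 M1,
        (-1 : ℝ) ^ (j + k) * (M1.choose j) * (M2.choose k) *
          (p1 * j / (p1 * j + p2 * k)) :=
  stmt_2_general M1 M2 hM1 p1 p2 hp1 hp2
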